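/- arXiv:2409.13463 — 5 statements merged into one kernel-verified Lean document; each statement's English description precedes it below -/
import Mathlib

section
/- Let γ > 0 and let k : [0,∞) → [0,∞) be a continuous, strictly increasing function with k(0) = γ and k(x) → +∞ as x → +∞. Let φ : [0,∞) → [0,∞) be the inverse of the map x ↦ k(x)(exp(γx) − 1), i.e. k(φ(x))·(exp(γ·φ(x)) − 1) = x for all x ≥ 0. Define Λ(x) := (1/γ)·x·ln x − ∫₀ˣ φ(u) du for x > 0. Then Λ(x)/x → +∞ as x → +∞. -/
open Filter Real Set

/-!
Since `Ψ y = k y (exp (γ y) - 1)` is monotone and `φ` is a right inverse of it, `φ` is monotone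
and unbounded, so `k (φ u) → ∞`. Hence `exp (γ φ u) - 1 = u / k (φ u) = o(u)`, i.e.
`(1/γ) log u - φ u → ∞`. For `u ≤ x` beyond some threshold `u₀` this gives
`φ u ≤ (1/γ) log x - M`, and for `u ≤ u₀` the same bound follows from monotonicity of `φ` and `log`;
integrating over `[0, x]` gives `Λ x / x ≥ M`.
-/

theorem MonotoneOn.of_rightInvOn {α β : Type*} [LinearOrder α] [LinearOrder β]
    {Ψ : α → β} {φ : β → α} {s : Set α} {t : Set β} (hΨ : MonotoneOn Ψ s)
    (hφ : MapsTo φ t s) (hinv : RightInvOn φ Ψ t) : MonotoneOn φ t := by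
  intro a ha b hb hab
  by_contra! hlt
  have hba : b ≤ a := by simpa only [hinv ha, hinv hb] using hΨ (hφ hb) (hφ ha) hlt.le
  exact hlt.ne (by rw [hab.antisymm hba])

theorem tendsto_atTop_of_rightInvOn {α β : Type*} [LinearOrder α] [LinearOrder β]
    [NoMaxOrder β] {Ψ : α → β} {φ : β → α} {a : α} {b : β} (hΨ : MonotoneOn Ψ (Ici a))
    (hφ : MapsTo φ (Ici b) (Ici a)) (hinv : RightInvOn φ Ψ (Ici b)) :
    Tendsto φ atTop atTop := by
  refine tendsto_atTop.2 fun c => ?_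
  filter_upwards [eventually_ge_atTop b, eventually_gt_atTop (Ψ (max c a))] with u hub hu
  by_contra! hlt
  have := hΨ (hφ hub) (le_max_right c a) (hlt.trans_le (le_max_left c a)).le
  rw [hinv hub] at this
  exact this.not_gt hu

theorem monotoneOn_mul_exp_sub_one {k : ℝ → ℝ} {γ : ℝ} (hγ : 0 ≤ γ)
    (hk : MonotoneOn k (Ici 0)) (hk_nonneg : ∀ x ≥ 0, 0 ≤ k x) :
    MonotoneOn (fun y => k y * (exp (γ * y) - 1)) (Ici 0) := by
  refine hk.mul (fun x _ y _ hxy => ?_) hk_nonneg fun x hx => ?_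
  · gcongr
  · simpa using one_le_exp (mul_nonneg hγ hx)

theorem tendsto_log_sub_atTop_of_exp_sub_one_le {g K : ℝ → ℝ} (hK : Tendsto K atTop atTop)
    (hg : ∀ᶠ u in atTop, exp (g u) - 1 ≤ u / K u) :
    Tendsto (fun u => log u - g u) atTop atTop := by
  refine tendsto_atTop.2 fun M => ?_
  have hC : 0 < 2 * exp M := by positivity
  filter_upwards [hg, hK.eventually_ge_atTop (2 * exp M), eventually_ge_atTop (2 * exp M)]
    with u hgu hKu hu
  have hu0 : 0 < u := hC.trans_le hu
  have hexp : exp (g u) ≤ u / exp M := by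
    have hKu' : u / K u ≤ u / (2 * exp M) := div_le_div_of_nonneg_left hu0.le hC hKu
    have h1 : 1 ≤ u / (2 * exp M) := (one_le_div hC).2 hu
    have h2 : u / exp M = 2 * (u / (2 * exp M)) := by field_simp
    linarith
  have hlog : g u ≤ log u - M := by
    rw [← log_exp M, ← log_div hu0.ne' (exp_pos M).ne']
    exact (le_log_iff_exp_le (by positivity)).2 hexp
  linarith

theorem tendsto_mul_sub_integral_div_atTop {φ L : ℝ → ℝ} {a : ℝ} (hφ : MonotoneOn φ (Ici 0))
    (hL : MonotoneOn L (Ici a)) (h : Tendsto (fun u => L u - φ u) atTop atTop) :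
    Tendsto (fun x => (x * L x - ∫ u in (0 : ℝ)..x, φ u) / x) atTop atTop := by
  refine tendsto_atTop.2 fun M => ?_
  obtain ⟨u₀, hu₀⟩ := eventually_atTop.1
    ((h.eventually_ge_atTop M).and (eventually_ge_atTop (max a 1)))
  have ha : a ≤ u₀ := le_of_max_le_left (hu₀ u₀ le_rfl).2
  have h1 : 1 ≤ u₀ := le_of_max_le_right (hu₀ u₀ le_rfl).2
  filter_upwards [eventually_ge_atTop u₀] with x hx
  have hx0 : 0 < x := by linarith
  have hφ_le : ∀ u ∈ Icc 0 x, φ u ≤ L x - M := by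
    rintro u ⟨hu0, hux⟩
    rcases le_total u u₀ with huu₀ | hu₀u
    · have hgap := (hu₀ u₀ le_rfl).1
      have hφu := hφ hu0 (mem_Ici.2 (by linarith)) huu₀
      have hLx := hL ha (ha.trans hx) hx
      linarith
    · have hgap := (hu₀ u hu₀u).1
      have hLx := hL (ha.trans hu₀u) (ha.trans hx) hux
      linarith
  have hint : ∫ u in (0 : ℝ)..x, φ u ≤ x * L x - x * M := by
    have hφ_int : IntervalIntegrable φ MeasureTheory.volume 0 x :=
      (hφ.mono (by rw [uIcc_of_le hx0.le]; exact Icc_subset_Ici_self)).intervalIntegrable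
    simpa using intervalIntegral.integral_mono_on hx0.le hφ_int intervalIntegrable_const hφ_le
  rw [le_div_iff₀ hx0]
  linarith

theorem Lambda_superlinear_general
    (γ : ℝ) (hγ : 0 < γ) (k φ : ℝ → ℝ)
    (hk_mono : StrictMonoOn k (Set.Ici 0))
    (hk_nonneg : ∀ x ≥ (0 : ℝ), 0 ≤ k x)
    (hk_top : Tendsto k atTop atTop)
    (hφ_nonneg : ∀ x ≥ (0 : ℝ), 0 ≤ φ x)
    (hφ_inv : ∀ x ≥ (0 : ℝ), k (φ x) * (Real.exp (γ * φ x) - 1) = x) :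
    Tendsto (fun x => ((1 / γ) * x * Real.log x - ∫ u in (0 : ℝ)..x, φ u) / x)
      atTop atTop := by
  have hΨ := monotoneOn_mul_exp_sub_one hγ.le hk_mono.monotoneOn hk_nonneg
  have hφ_mono : MonotoneOn φ (Ici 0) := hΨ.of_rightInvOn hφ_nonneg hφ_inv
  have hkφ_top : Tendsto (fun u => k (φ u)) atTop atTop :=
    hk_top.comp (tendsto_atTop_of_rightInvOn hΨ hφ_nonneg hφ_inv)
  have hexp : ∀ᶠ u in atTop, exp (γ * φ u) - 1 ≤ u / k (φ u) := by
    filter_upwards [hkφ_top.eventually_gt_atTop 0, eventually_ge_atTop 0] with u hk hu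
    rw [le_div_iff₀ hk, mul_comm, hφ_inv u hu]
  have hgap : Tendsto (fun u => (1 / γ) * log u - φ u) atTop atTop := by
    refine ((tendsto_log_sub_atTop_of_exp_sub_one_le hkφ_top hexp).const_mul_atTop
      (one_div_pos.2 hγ)).congr fun u => ?_
    field_simp
  have hL : MonotoneOn (fun u => (1 / γ) * log u) (Ici 1) := fun u hu _ _ huv =>
    mul_le_mul_of_nonneg_left (log_le_log (zero_lt_one.trans_le hu) huv) (one_div_pos.2 hγ).le
  refine (tendsto_mul_sub_integral_div_atTop hφ_mono hL hgap).congr fun x => ?_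
  ring

theorem Lambda_superlinear
    (γ : ℝ) (hγ : 0 < γ) (k φ : ℝ → ℝ)
    (hk_cont : ContinuousOn k (Set.Ici 0))
    (hk_mono : StrictMonoOn k (Set.Ici 0))
    (hk_nonneg : ∀ x ≥ (0 : ℝ), 0 ≤ k x)
    (hk0 : k 0 = γ)
    (hk_top : Tendsto k atTop atTop)
    (hφ_nonneg : ∀ x ≥ (0 : ℝ), 0 ≤ φ x)
    (hφ_inv : ∀ x ≥ (0 : ℝ), k (φ x) * (Real.exp (γ * φ x) - 1) = x) :
    Tendsto (fun x => ((1 / γ) * x * Real.log x - ∫ u in (0 : ℝ)..x, φ u) / x)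
      atTop atTop :=
  Lambda_superlinear_general γ hγ k φ hk_mono hk_nonneg hk_top hφ_nonneg hφ_inv
end

section
/- Let γ > 0 and let k : [0,∞) → [0,∞) be a continuous, strictly increasing function with k(0) = γ and k(x) → +∞ as x → +∞. Let φ : [0,∞) → [0,∞) be the inverse of the map x ↦ k(x)(exp(γx) − 1), i.e. k(φ(x))·(exp(γ·φ(x)) − 1) = x for all x ≥ 0. Then the function x ↦ (ln x + 1)/γ − φ(x) is unbounded above on (0, +∞): for every W ∈ ℝ there exists x > 0 with (ln x + 1)/γ − φ(x) > W. -/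
open Filter Real

theorem LambdaDeriv_unbounded
    (γ : ℝ) (hγ : 0 < γ) (k φ : ℝ → ℝ)
    (hk_cont : ContinuousOn k (Set.Ici 0))
    (hk_mono : StrictMonoOn k (Set.Ici 0))
    (hk_nonneg : ∀ x ≥ (0 : ℝ), 0 ≤ k x)
    (hk0 : k 0 = γ)
    (hk_top : Tendsto k atTop atTop)
    (hφ_nonneg : ∀ x ≥ (0 : ℝ), 0 ≤ φ x)
    (hφ_inv : ∀ x ≥ (0 : ℝ), k (φ x) * (Real.exp (γ * φ x) - 1) = x) :
    ∀ W : ℝ, ∃ x > (0 : ℝ), W < (Real.log x + 1) / γ - φ x := by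
  intro W
  obtain ⟨T, hT⟩ := (tendsto_atTop_atTop.mp hk_top) (Real.exp (γ * W + Real.log 2 - 1) + 1)
  set t : ℝ := max (max T (Real.log 2 / γ)) 1 with ht_def
  have ht1 : (1 : ℝ) ≤ t := le_max_right _ _
  have ht0 : 0 < t := lt_of_lt_of_le one_pos ht1
  have htT : T ≤ t := le_trans (le_max_left _ _) (le_max_left _ _)
  have htlog2 : Real.log 2 / γ ≤ t := le_trans (le_max_right _ _) (le_max_left _ _)
  have hkt : Real.exp (γ * W + Real.log 2 - 1) + 1 ≤ k t := hT t htT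
  have hkt_pos : 0 < k t := lt_of_lt_of_le (by positivity) hkt
  have hγt : Real.log 2 ≤ γ * t := by
    rw [div_le_iff₀ hγ] at htlog2; linarith [htlog2]
  have hexp2 : (2 : ℝ) ≤ Real.exp (γ * t) := by
    calc (2 : ℝ) = Real.exp (Real.log 2) := (Real.exp_log two_pos).symm
    _ ≤ Real.exp (γ * t) := Real.exp_le_exp.mpr hγt
  have hE : 0 < Real.exp (γ * t) - 1 := by linarith
  set x : ℝ := k t * (Real.exp (γ * t) - 1) with hx_def
  have hx_pos : 0 < x := mul_pos hkt_pos hE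
  have h1 := hφ_inv x hx_pos.le
  have hφx0 := hφ_nonneg x hx_pos.le
  -- strict monotonicity of Ψ
  have hΨ : StrictMonoOn (fun s => k s * (Real.exp (γ * s) - 1)) (Set.Ici 0) := by
    intro a ha b hb hab
    have ha' : (0 : ℝ) ≤ a := ha
    have hka : 0 < k a := by
      have : k 0 ≤ k a := hk_mono.monotoneOn (Set.self_mem_Ici) ha ha'
      rw [hk0] at this; linarith
    have hkb : k a < k b := hk_mono ha hb hab
    have hEab : Real.exp (γ * a) - 1 < Real.exp (γ * b) - 1 := by
      have := Real.exp_lt_exp.mpr (mul_lt_mul_of_pos_left hab hγ); linarith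
    have hEa : 0 ≤ Real.exp (γ * a) - 1 := by
      have := Real.one_le_exp (mul_nonneg hγ.le ha'); linarith
    calc k a * (Real.exp (γ * a) - 1) ≤ k b * (Real.exp (γ * a) - 1) :=
          mul_le_mul_of_nonneg_right hkb.le hEa
    _ < k b * (Real.exp (γ * b) - 1) :=
          mul_lt_mul_of_pos_left hEab (hka.trans hkb)
  have hφt : φ x = t := by
    apply hΨ.injOn (Set.mem_Ici.mpr hφx0) (Set.mem_Ici.mpr ht0.le)
    simpa using h1
  -- log bounds
  have hlogx : Real.log x = Real.log (k t) + Real.log (Real.exp (γ * t) - 1) :=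
    Real.log_mul hkt_pos.ne' hE.ne'
  have hlogkt : γ * W + Real.log 2 - 1 < Real.log (k t) := by
    have h2 : Real.exp (γ * W + Real.log 2 - 1) < k t := by linarith
    have := Real.log_lt_log (Real.exp_pos _) h2
    rwa [Real.log_exp] at this
  have hlogE : γ * t - Real.log 2 ≤ Real.log (Real.exp (γ * t) - 1) := by
    have hdiv : Real.exp (γ * t) / 2 ≤ Real.exp (γ * t) - 1 := by linarith
    have hpos : 0 < Real.exp (γ * t) / 2 := by positivity
    have := Real.log_le_log hpos hdiv
    rwa [Real.log_div (Real.exp_pos _).ne' two_ne_zero, Real.log_exp] at this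
  refine ⟨x, hx_pos, ?_⟩
  rw [hφt, lt_sub_iff_add_lt, lt_div_iff₀ hγ]
  nlinarith [hlogx, hlogkt, hlogE]
end

section
/- Let γ > 0 and let k : [0,∞) → [0,∞) be a continuous, strictly increasing function with k(0) = γ and k(x) → +∞ as x → +∞. Let φ : [0,∞) → [0,∞) be the inverse of the map x ↦ k(x)(exp(γx) − 1), i.e. k(φ(x))·(exp(γ·φ(x)) − 1) = x for all x ≥ 0. Then for all 0 < x₁ ≤ x₂ one has φ(x₂) − φ(x₁) ≤ (1/γ)(ln x₂ − ln x₁); equivalently, the function x ↦ (ln x)/γ − φ(x) is nondecreasing on (0, +∞). -/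
open Filter Real

theorem phi_log_monotone
    (γ : ℝ) (hγ : 0 < γ) (k φ : ℝ → ℝ)
    (hk_cont : ContinuousOn k (Set.Ici 0))
    (hk_mono : StrictMonoOn k (Set.Ici 0))
    (hk_nonneg : ∀ x ≥ (0 : ℝ), 0 ≤ k x)
    (hk0 : k 0 = γ)
    (hk_top : Tendsto k atTop atTop)
    (hφ_nonneg : ∀ x ≥ (0 : ℝ), 0 ≤ φ x)
    (hφ_inv : ∀ x ≥ (0 : ℝ), k (φ x) * (Real.exp (γ * φ x) - 1) = x) :
    ∀ x₁ x₂ : ℝ, 0 < x₁ → x₁ ≤ x₂ →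
      φ x₂ - φ x₁ ≤ (1 / γ) * (Real.log x₂ - Real.log x₁) := by
  intro x₁ x₂ hx₁ hx12
  have hx₂ : 0 < x₂ := lt_of_lt_of_le hx₁ hx12
  set a := φ x₁ with ha
  set b := φ x₂ with hb
  have ha0 : 0 ≤ a := hφ_nonneg x₁ hx₁.le
  have hb0 : 0 ≤ b := hφ_nonneg x₂ hx₂.le
  have hinv1 : k a * (Real.exp (γ * a) - 1) = x₁ := hφ_inv x₁ hx₁.le
  have hinv2 : k b * (Real.exp (γ * b) - 1) = x₂ := hφ_inv x₂ hx₂.le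
  have hkpos : ∀ x ≥ (0:ℝ), 0 < k x := by
    intro x hx
    rcases eq_or_lt_of_le hx with h | h
    · rw [← h, hk0]; exact hγ
    · have := hk_mono (Set.self_mem_Ici) (Set.mem_Ici.2 hx) h
      rw [hk0] at this; linarith
  have hexp : ∀ x : ℝ, 0 ≤ x → 0 ≤ Real.exp (γ * x) - 1 := by
    intro x hx
    have : (1:ℝ) ≤ Real.exp (γ * x) := by
      rw [← Real.exp_zero]
      exact Real.exp_le_exp.2 (by positivity)
    linarith
  -- a ≤ b
  have hab : a ≤ b := by
    by_contra h
    push_neg at h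
    have hx2lt : x₂ < x₁ := by
      rw [← hinv1, ← hinv2]
      rcases eq_or_lt_of_le hb0 with hb' | hb'
      · have ha' : 0 < a := hb' ▸ h
        have : Real.exp (γ * b) - 1 = 0 := by
          rw [← hb', mul_zero, Real.exp_zero]; ring
        rw [this, mul_zero]
        have h1 : 0 < k a := hkpos a ha0
        have h2 : 0 < Real.exp (γ * a) - 1 := by
          have : (1:ℝ) < Real.exp (γ * a) := by
            rw [← Real.exp_zero]
            exact Real.exp_lt_exp.2 (by positivity)
          linarith
        positivity
      · have hk' : k b < k a := hk_mono (Set.mem_Ici.2 hb0) (Set.mem_Ici.2 ha0) h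
        have he' : Real.exp (γ * b) - 1 < Real.exp (γ * a) - 1 := by
          have : Real.exp (γ * b) < Real.exp (γ * a) :=
            Real.exp_lt_exp.2 (by nlinarith)
          linarith
        have h1 : 0 < k b := hkpos b hb0
        have h2 : 0 < Real.exp (γ * b) - 1 := by
          have : (1:ℝ) < Real.exp (γ * b) := by
            rw [← Real.exp_zero]
            exact Real.exp_lt_exp.2 (by positivity)
          linarith
        nlinarith
    linarith
  -- key multiplicative inequality
  have hka : 0 < k a := hkpos a ha0
  have hkb : 0 < k b := hkpos b hb0
  have hkab : k a ≤ k b := by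
    rcases eq_or_lt_of_le hab with h | h
    · rw [h]
    · exact (hk_mono (Set.mem_Ici.2 ha0) (Set.mem_Ici.2 hb0) h).le
  have hEa : 0 ≤ Real.exp (γ * a) - 1 := hexp a ha0
  have hEab : Real.exp (γ * a) ≤ Real.exp (γ * b) :=
    Real.exp_le_exp.2 (by nlinarith)
  have key : x₁ * Real.exp (γ * b) ≤ x₂ * Real.exp (γ * a) := by
    rw [← hinv1, ← hinv2]
    have hEbpos : 0 < Real.exp (γ * b) := Real.exp_pos _
    have hEapos : 0 < Real.exp (γ * a) := Real.exp_pos _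
    nlinarith [mul_le_mul_of_nonneg_right hkab (mul_nonneg hEa hEbpos.le),
      mul_le_mul_of_nonneg_left hEab hkb.le]
  have hlog := Real.log_le_log (by positivity) key
  rw [Real.log_mul hx₁.ne' (Real.exp_ne_zero _),
      Real.log_mul hx₂.ne' (Real.exp_ne_zero _),
      Real.log_exp, Real.log_exp] at hlog
  have h2 : γ * (b - a) ≤ Real.log x₂ - Real.log x₁ := by linarith
  have h3 := mul_le_mul_of_nonneg_left h2 (le_of_lt (one_div_pos.2 hγ))
  have h4 : (1 / γ) * (γ * (b - a)) = b - a := by field_simp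
  linarith
end

section
/- Let γ > 0 and let k : [0,∞) → [0,∞) be continuously differentiable and strictly increasing with k(0) = γ and k(x) → +∞ as x → +∞. Let φ : [0,∞) → [0,∞) be the inverse of the map Ψ'(x) := k(x)(exp(γx) − 1), i.e. k(φ(x))·(exp(γ·φ(x)) − 1) = x for all x ≥ 0. Then φ is differentiable on (0, +∞) and for every x > 0 its derivative satisfies φ'(x) ≤ 1/(γ(x + γ)). -/
/-!
Write `Ψ'(t) = k(t)(exp(γt) − 1)`. On `[0, ∞)` it is strictly increasing, so `φ` is its left
inverse there, and the inverse function theorem gives `φ'(x) = 1 / Ψ''(φ x)` as soon as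
`Ψ''(φ x) ≠ 0`. Since `k' ≥ 0` and `k ≥ γ`,
`Ψ''(t) ≥ γ k(t) exp(γt) = γ (Ψ'(t) + k(t)) ≥ γ (Ψ'(t) + γ)`, which at `t = φ x` is `γ (x + γ)`.
-/

open Filter Real Topology Set

noncomputable def Ψ' (γ : ℝ) (k : ℝ → ℝ) (t : ℝ) : ℝ := k t * (exp (γ * t) - 1)

section

variable {γ : ℝ} {k : ℝ → ℝ}

@[simp]
lemma Ψ'_zero : Ψ' γ k 0 = 0 := by
  simp [Ψ']

lemma Ψ'_nonneg (hγ : 0 ≤ γ) {t : ℝ} (hkt : 0 ≤ k t) (ht : 0 ≤ t) : 0 ≤ Ψ' γ k t :=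
  mul_nonneg hkt (sub_nonneg.2 (one_le_exp (mul_nonneg hγ ht)))

lemma Ψ'_strictMonoOn (hγ : 0 < γ) (hk : StrictMonoOn k (Ici 0)) (hk0 : 0 ≤ k 0) :
    StrictMonoOn (Ψ' γ k) (Ici 0) := fun _ ha _ hb hab =>
  mul_lt_mul'' (hk ha hb hab)
    (sub_lt_sub_right (exp_lt_exp.2 (mul_lt_mul_of_pos_left hab hγ)) 1)
    (hk0.trans (hk.monotoneOn self_mem_Ici ha ha))
    (sub_nonneg.2 (one_le_exp (mul_nonneg hγ.le ha)))

lemma hasStrictDerivAt_Ψ' {k' t : ℝ} (hk : HasStrictDerivAt k k' t) :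
    HasStrictDerivAt (Ψ' γ k) (k' * (exp (γ * t) - 1) + k t * (exp (γ * t) * γ)) t := by
  have hlin : HasStrictDerivAt (fun s => γ * s) γ t := by
    simpa using (hasStrictDerivAt_id t).const_mul γ
  exact hk.mul (hlin.exp.sub_const 1)

lemma mul_Ψ'_add_le_deriv (hγ : 0 ≤ γ) {k' t : ℝ} (hk' : 0 ≤ k') (hkt : γ ≤ k t) (ht : 0 ≤ t) :
    γ * (Ψ' γ k t + γ) ≤ k' * (exp (γ * t) - 1) + k t * (exp (γ * t) * γ) := by
  have hexp : 0 ≤ exp (γ * t) - 1 := sub_nonneg.2 (one_le_exp (mul_nonneg hγ ht))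
  calc γ * (Ψ' γ k t + γ) ≤ γ * (Ψ' γ k t + k t) := by gcongr
    _ = k t * (exp (γ * t) * γ) := by unfold Ψ'; ring
    _ ≤ _ := le_add_of_nonneg_left (mul_nonneg hk' hexp)

end

theorem phi_deriv_upper_bound_general
    (γ : ℝ) (hγ : 0 < γ) (k φ : ℝ → ℝ)
    (hk_smooth : ContDiff ℝ 1 k)
    (hk_mono : StrictMonoOn k (Set.Ici 0))
    (hk0 : k 0 = γ)
    (hφ_nonneg : ∀ x ≥ (0 : ℝ), 0 ≤ φ x)
    (hφ_inv : ∀ x ≥ (0 : ℝ), k (φ x) * (Real.exp (γ * φ x) - 1) = x) :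
    ∀ x > (0 : ℝ), DifferentiableAt ℝ φ x ∧ deriv φ x ≤ 1 / (γ * (x + γ)) := by
  intro x hx
  have hγ_le : ∀ t ∈ Ici (0 : ℝ), γ ≤ k t := fun t ht =>
    hk0 ▸ hk_mono.monotoneOn self_mem_Ici ht ht
  have hΨφ : Ψ' γ k (φ x) = x := hφ_inv x hx.le
  have hy : 0 < φ x :=
    (hφ_nonneg x hx.le).lt_of_ne fun h => hx.ne' (by rw [← hΨφ, ← h, Ψ'_zero])
  have hφΨ : ∀ t ∈ Ici (0 : ℝ), φ (Ψ' γ k t) = t :=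
    (Ψ'_strictMonoOn hγ hk_mono (hk0 ▸ hγ.le)).injOn.rightInvOn_of_leftInvOn
      (fun s hs => hφ_inv s hs) (fun t ht => Ψ'_nonneg hγ.le (hγ.le.trans (hγ_le t ht)) ht)
      (fun s hs => hφ_nonneg s hs)
  have hk_deriv : HasStrictDerivAt k (deriv k (φ x)) (φ x) :=
    hk_smooth.hasStrictDerivAt one_ne_zero
  have hk'_nonneg : 0 ≤ deriv k (φ x) := by
    rw [← derivWithin_of_isOpen isOpen_Ioi hy]
    exact (hk_mono.monotoneOn.mono Ioi_subset_Ici_self).derivWithin_nonneg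
  have hbound := mul_Ψ'_add_le_deriv hγ.le hk'_nonneg (hγ_le _ hy.le) hy.le
  rw [hΨφ] at hbound
  have hφ_deriv := (hasStrictDerivAt_Ψ' hk_deriv).to_local_left_inverse
    ((by positivity : 0 < γ * (x + γ)).trans_le hbound).ne'
    (eventually_gt_nhds hy |>.mono fun t ht => hφΨ t ht.le)
  rw [hΨφ] at hφ_deriv
  refine ⟨hφ_deriv.hasDerivAt.differentiableAt, ?_⟩
  rw [hφ_deriv.hasDerivAt.deriv, one_div]
  exact inv_anti₀ (by positivity) hbound

theorem phi_deriv_upper_bound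
    (γ : ℝ) (hγ : 0 < γ) (k φ : ℝ → ℝ)
    (hk_smooth : ContDiff ℝ 1 k)
    (hk_mono : StrictMonoOn k (Set.Ici 0))
    (hk_nonneg : ∀ x ≥ (0 : ℝ), 0 ≤ k x)
    (hk0 : k 0 = γ)
    (hk_top : Tendsto k atTop atTop)
    (hφ_nonneg : ∀ x ≥ (0 : ℝ), 0 ≤ φ x)
    (hφ_inv : ∀ x ≥ (0 : ℝ), k (φ x) * (Real.exp (γ * φ x) - 1) = x) :
    ∀ x > (0 : ℝ), DifferentiableAt ℝ φ x ∧ deriv φ x ≤ 1 / (γ * (x + γ)) :=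
  phi_deriv_upper_bound_general γ hγ k φ hk_smooth hk_mono hk0 hφ_nonneg hφ_inv
end

section
/- Let a ≥ 0, b ≥ 0, and let φ : [0,∞) → [0,∞) be a nondecreasing function such that φ(x) ≤ a·x + b for all x ≥ 0. Then for every real n ≥ 1 and every x ≥ 0, one has φ(x) ≤ (n + 2a + 2b)·x + φ((2a + 2b)/(n + 2a + 2b)). -/
theorem linear_growth_modulus_linearization
    (a b : ℝ) (ha : 0 ≤ a) (hb : 0 ≤ b) (φ : ℝ → ℝ)
    (hφ_nonneg : ∀ x ≥ (0 : ℝ), 0 ≤ φ x)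
    (hφ_mono : MonotoneOn φ (Set.Ici 0))
    (hφ_growth : ∀ x ≥ (0 : ℝ), φ x ≤ a * x + b) :
    ∀ n ≥ (1 : ℝ), ∀ x ≥ (0 : ℝ),
      φ x ≤ (n + 2 * a + 2 * b) * x + φ ((2 * a + 2 * b) / (n + 2 * a + 2 * b)) := by
  intro n hn x hx
  have hN : (0:ℝ) < n + 2 * a + 2 * b := by linarith
  have hq : 0 ≤ (2 * a + 2 * b) / (n + 2 * a + 2 * b) :=
    div_nonneg (by linarith) hN.le
  by_cases hcase : x ≤ (2 * a + 2 * b) / (n + 2 * a + 2 * b)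
  · have h1 := hφ_mono (Set.mem_Ici.mpr hx) (Set.mem_Ici.mpr hq) hcase
    nlinarith [hφ_nonneg x hx]
  · push_neg at hcase
    have hx' : 2 * a + 2 * b < (n + 2 * a + 2 * b) * x := by
      rw [div_lt_iff₀ hN] at hcase; nlinarith
    have h1 := hφ_growth x hx
    have h2 := hφ_nonneg _ hq
    nlinarith
end
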